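/- Let Ā be an algebra in a congruence modular variety with Gumm difference term d, let A be a subalgebra of Ā, let a ∈ A, let ᾱ ≤ ζ̄ where ζ̄ is the center of Ā, and let β ≤ ᾱ|_A be a congruence on A. Define β̄ := {(x,y) ∈ ζ̄ : d(a,x,y) ∈ [a]β}. Then β̄ is a congruence on Ā with β̄ ≤ ᾱ and β̄|_A = β. -/

import Mathlib

/-- An algebraic signature: a type of operation symbols with finite arities. -/
structure Signature where
  ops : Type
  arity : ops → ℕ

/-- An algebra for a signature. -/
structure SAlgebra (S : Signature) where
  carrier : Type
  interp : (o : S.ops) → (Fin (S.arity o) → carrier) → carrier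

namespace SAlgebra

variable {S : Signature}

/-- Binary product of algebras. -/
def prod (A B : SAlgebra S) : SAlgebra S where
  carrier := A.carrier × B.carrier
  interp o x := (A.interp o fun i => (x i).1, B.interp o fun i => (x i).2)

/-- Product of a family of algebras. -/
def pi {ι : Type} (A : ι → SAlgebra S) : SAlgebra S where
  carrier := ∀ i, (A i).carrier
  interp o x i := (A i).interp o fun j => x j i

end SAlgebra

/-- Homomorphisms of algebras. -/
structure SHom {S : Signature} (A B : SAlgebra S) where
  toFun : A.carrier → B.carrier
  map : ∀ (o : S.ops) (x : Fin (S.arity o) → A.carrier),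
    toFun (A.interp o x) = B.interp o fun i => toFun (x i)

namespace SHom

variable {S : Signature}

/-- Composition of homomorphisms. -/
def comp {A B C : SAlgebra S} (g : SHom B C) (f : SHom A B) : SHom A C where
  toFun := g.toFun ∘ f.toFun
  map o x := by simp [Function.comp, f.map, g.map]

/-- The `i`-th projection of a product. -/
def proj {ι : Type} (A : ι → SAlgebra S) (i : ι) : SHom (SAlgebra.pi A) (A i) where
  toFun x := x i
  map _ _ := rfl

end SHom

/-- Congruences of an algebra. -/
structure SCon {S : Signature} (A : SAlgebra S) where
  r : A.carrier → A.carrier → Prop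
  iseqv : Equivalence r
  compat : ∀ (o : S.ops) (x y : Fin (S.arity o) → A.carrier),
    (∀ i, r (x i) (y i)) → r (A.interp o x) (A.interp o y)

namespace SCon

variable {S : Signature} {A : SAlgebra S}

instance : PartialOrder (SCon A) where
  le c d := ∀ x y, c.r x y → d.r x y
  le_refl _ _ _ h := h
  le_trans _ _ _ h h' x y hx := h' x y (h x y hx)
  le_antisymm a b h h' := by
    cases a; cases b
    have : ∀ x y : A.carrier, _ ↔ _ := fun x y => Iff.intro (h x y) (h' x y)
    simp only [SCon.mk.injEq]
    funext x y
    exact propext (this x y)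

instance : InfSet (SCon A) :=
  ⟨fun s =>
    { r := fun x y => ∀ c ∈ s, c.r x y
      iseqv := ⟨fun x c _ => c.iseqv.refl x, fun h c hc => c.iseqv.symm (h c hc),
        fun h1 h2 c hc => c.iseqv.trans (h1 c hc) (h2 c hc)⟩
      compat := fun o x y h c hc => c.compat o x y fun i => h i c hc }⟩

instance : CompleteLattice (SCon A) :=
  completeLatticeOfInf _ (fun s =>
    ⟨fun c hc x y h => h c hc, fun b hb x y h c hc => hb hc x y h⟩)

/-- Restriction (inverse image) of a congruence along a homomorphism. -/
def comap {B : SAlgebra S} (f : SHom A B) (θ : SCon B) : SCon A where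
  r x y := θ.r (f.toFun x) (f.toFun y)
  iseqv := ⟨fun _ => θ.iseqv.refl _, θ.iseqv.symm, θ.iseqv.trans⟩
  compat o x y h := by
    show θ.r (f.toFun (A.interp o x)) (f.toFun (A.interp o y))
    rw [f.map, f.map]
    exact θ.compat o _ _ h

/-- Product of two congruences. -/
def prodCon {A B : SAlgebra S} (φ : SCon A) (ψ : SCon B) : SCon (A.prod B) where
  r x y := φ.r x.1 y.1 ∧ ψ.r x.2 y.2
  iseqv := ⟨fun _ => ⟨φ.iseqv.refl _, ψ.iseqv.refl _⟩,
    fun h => ⟨φ.iseqv.symm h.1, ψ.iseqv.symm h.2⟩,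
    fun h h' => ⟨φ.iseqv.trans h.1 h'.1, ψ.iseqv.trans h.2 h'.2⟩⟩
  compat o x y h := ⟨φ.compat o _ _ fun i => (h i).1, ψ.compat o _ _ fun i => (h i).2⟩

/-- Product of a family of congruences. -/
def piCon {ι : Type} {A : ι → SAlgebra S} (φ : ∀ i, SCon (A i)) : SCon (SAlgebra.pi A) where
  r x y := ∀ i, (φ i).r (x i) (y i)
  iseqv := ⟨fun _ i => (φ i).iseqv.refl _, fun h i => (φ i).iseqv.symm (h i),
    fun h h' i => (φ i).iseqv.trans (h i) (h' i)⟩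
  compat o x y h i := (φ i).compat o _ _ fun j => h j i

end SCon

/-- Terms in `n` variables over a signature. -/
inductive STerm (S : Signature) : ℕ → Type where
  | var : {n : ℕ} → Fin n → STerm S n
  | app : {n : ℕ} → (o : S.ops) → (Fin (S.arity o) → STerm S n) → STerm S n

/-- Evaluation of a term in an algebra. -/
def STerm.eval {S : Signature} (A : SAlgebra S) {n : ℕ} : STerm S n → (Fin n → A.carrier) → A.carrier
  | .var i, x => x i
  | .app o t, x => A.interp o fun j => (t j).eval A x

/-- The term-condition centralizer relation `C(α, β; δ)`. -/
def Centralizes {S : Signature} (A : SAlgebra S) (α β δ : SCon A) : Prop :=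
  ∀ (n m : ℕ) (t : STerm S (n + m)) (a b : Fin n → A.carrier) (u v : Fin m → A.carrier),
    (∀ i, α.r (a i) (b i)) → (∀ j, β.r (u j) (v j)) →
    δ.r (t.eval A (Fin.append a u)) (t.eval A (Fin.append a v)) →
    δ.r (t.eval A (Fin.append b u)) (t.eval A (Fin.append b v))

/-- The commutator `[α, β]`: the least congruence `δ` with `C(α, β; δ)`. -/
def conCommutator {S : Signature} (A : SAlgebra S) (α β : SCon A) : SCon A :=
  sInf {δ | Centralizes A α β δ}

/-- The center of an algebra: the largest central congruence. -/
def conCenter {S : Signature} (A : SAlgebra S) : SCon A :=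
  sSup {θ | conCommutator A θ ⊤ = ⊥}

/-- A class of algebras is a variety iff it is closed under subalgebras
(isomorphic copies included), homomorphic images and products. -/
def IsVariety {S : Signature} (V : SAlgebra S → Prop) : Prop :=
  (∀ (A B : SAlgebra S) (e : SHom A B), Function.Injective e.toFun → V B → V A) ∧
  (∀ (A B : SAlgebra S) (p : SHom A B), Function.Surjective p.toFun → V A → V B) ∧
  (∀ (ι : Type) (A : ι → SAlgebra S), (∀ i, V (A i)) → V (SAlgebra.pi A))

/-- A congruence modular variety. -/
def IsCongruenceModularVariety {S : Signature} (V : SAlgebra S → Prop) : Prop :=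
  IsVariety V ∧ ∀ A : SAlgebra S, V A → IsModularLattice (SCon A)

/-- A Gumm difference term for the class `V`:  `d(x,y,y) = x` holds identically,
and `d(x,x,y) = y` whenever `x θ y` for an abelian congruence `θ`. -/
def IsGummDifferenceTerm {S : Signature} (V : SAlgebra S → Prop) (d : STerm S 3) : Prop :=
  (∀ A : SAlgebra S, V A → ∀ x y : A.carrier, d.eval A ![x, y, y] = x) ∧
  (∀ A : SAlgebra S, V A → ∀ θ : SCon A, conCommutator A θ θ = ⊥ →
    ∀ x y : A.carrier, θ.r x y → d.eval A ![x, x, y] = y)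

/-- `R` is an absolute retract in `V`: every embedding of `R` into a member of `V`
admits a retraction. -/
def IsAbsoluteRetract {S : Signature} (V : SAlgebra S → Prop) (R : SAlgebra S) : Prop :=
  ∀ A : SAlgebra S, V A → ∀ e : SHom R A, Function.Injective e.toFun →
    ∃ p : SHom A R, ∀ x, p.toFun (e.toFun x) = x

/-- An embedding is essential iff every congruence of the codomain restricting
trivially is trivial. -/
def IsEssential {S : Signature} {A B : SAlgebra S} (e : SHom A B) : Prop :=
  ∀ θ : SCon B, SCon.comap e θ = ⊥ → θ = ⊥

/-- A congruence `α` is dense: any congruence meeting it trivially is trivial. -/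
def DenseCon {S : Signature} {A : SAlgebra S} (α : SCon A) : Prop :=
  ∀ θ : SCon A, θ ⊓ α = ⊥ → θ = ⊥

/-- The setoid underlying a congruence. -/
def SCon.setoid {S : Signature} {A : SAlgebra S} (θ : SCon A) : Setoid A.carrier :=
  ⟨θ.r, θ.iseqv⟩

/-- Quotient algebra. -/
noncomputable def SAlgebra.quot {S : Signature} (A : SAlgebra S) (θ : SCon A) : SAlgebra S where
  carrier := Quotient θ.setoid
  interp o x := Quotient.mk θ.setoid (A.interp o fun i => (x i).out)

theorem SCon.out_rel {S : Signature} {A : SAlgebra S} (θ : SCon A) (a : A.carrier) :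
    θ.r (Quotient.out (Quotient.mk θ.setoid a)) a :=
  @Quotient.exact _ θ.setoid _ _ (Quotient.out_eq _)

/-- The canonical quotient homomorphism. -/
def SHom.quotHom {S : Signature} (A : SAlgebra S) (θ : SCon A) : SHom A (A.quot θ) where
  toFun := Quotient.mk θ.setoid
  map o x := Quotient.sound (θ.compat o _ _ fun i => θ.iseqv.symm (θ.out_rel (x i)))

/-- Product map of a family of homomorphisms. -/
def SHom.piMap {S : Signature} {ι : Type} {A B : ι → SAlgebra S} (f : ∀ i, SHom (A i) (B i)) :
    SHom (SAlgebra.pi A) (SAlgebra.pi B) where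
  toFun x i := (f i).toFun (x i)
  map o x := funext fun i => (f i).map o fun j => x j i

/-- The congruence `φ/θ` on the quotient `A/θ`, for `θ ≤ φ`. -/
def SCon.quotCon {S : Signature} {A : SAlgebra S} (θ φ : SCon A) (h : θ ≤ φ) :
    SCon (A.quot θ) where
  r a b := φ.r a.out b.out
  iseqv := ⟨fun _ => φ.iseqv.refl _, φ.iseqv.symm, φ.iseqv.trans⟩
  compat o x y hxy := by
    have hx := h _ _ (θ.out_rel (A.interp o fun i => (x i).out))
    have hy := h _ _ (θ.out_rel (A.interp o fun i => (y i).out))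
    exact φ.iseqv.trans hx (φ.iseqv.trans (φ.compat o _ _ hxy) (φ.iseqv.symm hy))

/-- Finitely subdirectly irreducible: `⊥` is meet irreducible in the congruence lattice. -/
def IsFSI {S : Signature} (A : SAlgebra S) : Prop :=
  ∀ θ φ : SCon A, θ ⊓ φ = ⊥ → θ = ⊥ ∨ φ = ⊥

/-- Subdirectly irreducible: the congruence lattice has a monolith. -/
def IsSubdirectlyIrreducible {S : Signature} (A : SAlgebra S) : Prop :=
  ∃ μ : SCon A, μ ≠ ⊥ ∧ ∀ θ : SCon A, θ ≠ ⊥ → μ ≤ θ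

/-! The center `ζ` is the one-variable term condition made concrete: `x ζ y` iff `x` and `y` can be
exchanged in every term equation `t(x, ū) = t(x, v̄)`. Exchanging one coordinate at a time gives the
term condition for whole tuples, so this relation is a congruence centralizing `⊤`; hence it is the
center, and the center is abelian, so `d(x, x, y) = y` on it.

Every identity of `d` needed for `β̄` comes from a single instance of the term condition: two
instances of one term, equal for trivial reasons while a central argument is `x`, stay equal when it
is moved to `y`. With `d(s, y, x) = d(s, d(s, x, y), s)`,
`d(s, x, z) = d(d(s, x, y), s, d(s, y, z))` and
`d(s, f x̄, f ȳ) = d(s, f(s, …, s), f(d(s, xᵢ, yᵢ)))`, the differences `d(a, -, -)` of `β̄` are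
again `e`-images of elements of `[a]β`, so `β̄` is a congruence. Finally `y = d(x, a, d(a, x, y))`
gives `β̄ ≤ ᾱ`, and, since `e` is injective, `β̄|_A ≤ β`.
-/

open Function

namespace STerm

variable {S : Signature}

def subst {n m : ℕ} (σ : Fin n → STerm S m) : STerm S n → STerm S m
  | .var i => σ i
  | .app o t => .app o fun j => subst σ (t j)

theorem eval_subst {A : SAlgebra S} {n m : ℕ} (σ : Fin n → STerm S m) (t : STerm S n)
    (env : Fin m → A.carrier) :
    (t.subst σ).eval A env = t.eval A fun i => (σ i).eval A env := by
  induction t with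
  | var i => rfl
  | app o ts ih => simp only [subst, eval, ih]

theorem eval_subst_three {A : SAlgebra S} {m : ℕ} (d : STerm S 3) (t₀ t₁ t₂ : STerm S m)
    (env : Fin m → A.carrier) :
    (d.subst ![t₀, t₁, t₂]).eval A env =
      d.eval A ![t₀.eval A env, t₁.eval A env, t₂.eval A env] := by
  rw [eval_subst]
  congr 1
  funext i
  fin_cases i <;> rfl

def substAt {n N : ℕ} (t : STerm S N) (j : Fin N) (s : STerm S (n + N)) : STerm S (n + N) :=
  t.subst fun i => if i = j then s else .var (Fin.natAdd n i)

theorem eval_substAt {A : SAlgebra S} {n N : ℕ} (t : STerm S N) (j : Fin N)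
    (s : STerm S (n + N)) (z : Fin n → A.carrier) (w : Fin N → A.carrier) :
    (t.substAt j s).eval A (Fin.append z w) =
      t.eval A (update w j (s.eval A (Fin.append z w))) := by
  rw [substAt, eval_subst]
  congr 1
  funext i
  by_cases hij : i = j
  · subst hij; simp
  · simp [hij, eval, Fin.append_right]

theorem eval_rel {A : SAlgebra S} (θ : SCon A) {n : ℕ} (t : STerm S n)
    {x y : Fin n → A.carrier} (h : ∀ i, θ.r (x i) (y i)) :
    θ.r (t.eval A x) (t.eval A y) := by
  induction t with
  | var i => exact h i
  | app o ts ih => exact θ.compat o _ _ ih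

end STerm

theorem SHom.map_eval {S : Signature} {A B : SAlgebra S} (e : SHom A B) {n : ℕ} (t : STerm S n)
    (env : Fin n → A.carrier) :
    e.toFun (t.eval A env) = t.eval B (e.toFun ∘ env) := by
  induction t with
  | var i => rfl
  | app o ts ih => simp only [STerm.eval, e.map, ih]

theorem SHom.map_eval_three {S : Signature} {A B : SAlgebra S} (e : SHom A B) (d : STerm S 3)
    (x y z : A.carrier) :
    e.toFun (d.eval A ![x, y, z]) = d.eval B ![e.toFun x, e.toFun y, e.toFun z] := by
  rw [e.map_eval]
  congr 1
  funext i
  fin_cases i <;> rfl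

theorem SCon.eval_three_rel {S : Signature} {A : SAlgebra S} (θ : SCon A) (d : STerm S 3)
    {x₀ x₁ x₂ y₀ y₁ y₂ : A.carrier} (h₀ : θ.r x₀ y₀) (h₁ : θ.r x₁ y₁) (h₂ : θ.r x₂ y₂) :
    θ.r (d.eval A ![x₀, x₁, x₂]) (d.eval A ![y₀, y₁, y₂]) :=
  STerm.eval_rel θ d fun i => by fin_cases i <;> assumption

namespace SCon

variable {S : Signature} {A : SAlgebra S}

theorem top_r (x y : A.carrier) : (⊤ : SCon A).r x y := fun _ h => h.elim

theorem bot_r_iff {x y : A.carrier} : (⊥ : SCon A).r x y ↔ x = y :=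
  ⟨fun h => h ⟨Eq, eq_equivalence, fun _ _ _ h => congrArg _ (funext h)⟩ (Set.mem_univ _),
    fun h => h ▸ (⊥ : SCon A).iseqv.refl x⟩

end SCon

section Commutator

variable {S : Signature} {A : SAlgebra S}

theorem centralizes_conCommutator (α β : SCon A) : Centralizes A α β (conCommutator A α β) :=
  fun n m t a b u v ha hu h δ hδ => hδ n m t a b u v ha hu (h δ hδ)

theorem conCommutator_eq_bot {α β : SCon A} (h : Centralizes A α β ⊥) :
    conCommutator A α β = ⊥ :=
  le_antisymm (sInf_le h) bot_le

end Commutator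

section Center

variable {S : Signature}

def CenterRel (A : SAlgebra S) (x y : A.carrier) : Prop :=
  ∀ (N : ℕ) (t : STerm S N) (j : Fin N) (u v : Fin N → A.carrier),
    t.eval A (update u j x) = t.eval A (update v j x) ↔
      t.eval A (update u j y) = t.eval A (update v j y)

variable {A : SAlgebra S}

theorem CenterRel.eval_eq_iff_of_finset {N : ℕ} (t : STerm S N) (s : Finset (Fin N))
    {p p' q q' : Fin N → A.carrier}
    (hs : ∀ i ∈ s, CenterRel A (p i) (q i) ∧ p' i = p i ∧ q' i = q i)
    (hout : ∀ i ∉ s, q i = p i ∧ q' i = p' i) :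
    t.eval A p = t.eval A p' ↔ t.eval A q = t.eval A q' := by
  classical
  induction s using Finset.induction_on generalizing p p' with
  | empty =>
    obtain rfl : q = p := funext fun i => (hout i (Finset.notMem_empty i)).1
    obtain rfl : q' = p' := funext fun i => (hout i (Finset.notMem_empty i)).2
    rfl
  | insert j s hj ih =>
    obtain ⟨hc, hp', -⟩ := hs j (Finset.mem_insert_self j s)
    have swap_j : t.eval A p = t.eval A p' ↔
        t.eval A (update p j (q j)) = t.eval A (update p' j (q j)) := by
      have := hc N t j p p'
      rwa [update_eq_self, ← hp', update_eq_self] at this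
    rw [swap_j]
    apply ih
    · intro i hi
      have hij : i ≠ j := ne_of_mem_of_not_mem hi hj
      simpa [hij] using hs i (Finset.mem_insert_of_mem hi)
    · intro i hi
      by_cases hij : i = j
      · subst hij; simp [(hs i (Finset.mem_insert_self i s)).2.2]
      · simpa [hij] using hout i (by simp [hij, hi])

theorem CenterRel.eval_append_eq_iff {n m : ℕ} (t : STerm S (n + m)) {x y : Fin n → A.carrier}
    (h : ∀ i, CenterRel A (x i) (y i)) (u v : Fin m → A.carrier) :
    t.eval A (Fin.append x u) = t.eval A (Fin.append x v) ↔
      t.eval A (Fin.append y u) = t.eval A (Fin.append y v) := by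
  refine eval_eq_iff_of_finset t (Finset.univ.map (Fin.castAddEmb m)) ?_ ?_
  · simp [h]
  · intro i hi
    induction i using Fin.addCases with
    | left i => simp at hi
    | right i => simp

theorem CenterRel.eval_cons_eq_iff {x y : A.carrier} (h : CenterRel A x y) {N : ℕ}
    (t : STerm S (N + 1)) (u v : Fin N → A.carrier) :
    t.eval A (Fin.cons x u) = t.eval A (Fin.cons x v) ↔
      t.eval A (Fin.cons y u) = t.eval A (Fin.cons y v) := by
  simpa only [Fin.update_cons_zero] using h (N + 1) t 0 (Fin.cons x u) (Fin.cons x v)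

variable (A)

def centerCon : SCon A where
  r := CenterRel A
  iseqv := ⟨fun _ _ _ _ _ _ => Iff.rfl, fun h N t j u v => (h N t j u v).symm,
    fun h h' N t j u v => (h N t j u v).trans (h' N t j u v)⟩
  compat o x y h N t j u v := by
    simpa only [STerm.eval_substAt, STerm.eval, Fin.append_left] using
      CenterRel.eval_append_eq_iff (t.substAt j (.app o fun k => .var (Fin.castAdd N k))) h u v

theorem centralizes_centerCon : Centralizes A (centerCon A) ⊤ ⊥ := by
  intro n m t a b u v ha _ h
  rw [SCon.bot_r_iff] at h ⊢
  exact (CenterRel.eval_append_eq_iff t ha u v).mp h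

theorem centerRel_of_centralizes {θ : SCon A} (hθ : Centralizes A θ ⊤ ⊥) {x y : A.carrier}
    (hxy : θ.r x y) : CenterRel A x y := by
  have transfer : ∀ {x y}, θ.r x y →
      ∀ (N : ℕ) (t : STerm S N) (j : Fin N) (u v : Fin N → A.carrier),
        t.eval A (update u j x) = t.eval A (update v j x) →
          t.eval A (update u j y) = t.eval A (update v j y) := by
    intro x y hxy N t j u v h
    have hc := hθ 1 N (t.substAt j (.var (Fin.castAdd N 0))) ![x] ![y] u v
      (Fin.forall_fin_one.2 hxy) fun _ => SCon.top_r _ _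
    simp only [SCon.bot_r_iff, STerm.eval_substAt, STerm.eval, Fin.append_left] at hc
    exact hc h
  exact fun N t j u v => ⟨transfer hxy N t j u v, transfer (θ.iseqv.symm hxy) N t j u v⟩

theorem conCenter_eq_centerCon : conCenter A = centerCon A :=
  le_antisymm (sSup_le fun θ hθ _ _ => centerRel_of_centralizes A
      ((show conCommutator A θ ⊤ = ⊥ from hθ) ▸ centralizes_conCommutator θ ⊤))
    (le_sSup (conCommutator_eq_bot (centralizes_centerCon A)))

theorem conCommutator_centerCon_self : conCommutator A (centerCon A) (centerCon A) = ⊥ :=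
  conCommutator_eq_bot fun n m t a b u v ha _ =>
    centralizes_centerCon A n m t a b u v ha fun _ => SCon.top_r _ _

end Center

section DifferenceTerm

variable {S : Signature}

structure IsCenterDifference (A : SAlgebra S) (d : STerm S 3) : Prop where
  cancel_right : ∀ x y : A.carrier, d.eval A ![x, y, y] = x
  cancel_left : ∀ x y : A.carrier, CenterRel A x y → d.eval A ![x, x, y] = y

variable {A : SAlgebra S} {d : STerm S 3}

namespace IsCenterDifference

theorem recover_right (hd : IsCenterDifference A d) {x y : A.carrier} (hxy : CenterRel A x y)
    (s : A.carrier) : d.eval A ![x, s, d.eval A ![s, x, y]] = y := by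
  have key := (hxy.eval_cons_eq_iff (d.subst ![.var 1, .var 2, d.subst ![.var 3, .var 4, .var 0]])
    ![x, s, s, x] ![x, x, x, x]).mp
  simpa [STerm.eval_subst_three, STerm.eval, hd.cancel_right, hd.cancel_left _ _ hxy] using key

theorem symm_eq (hd : IsCenterDifference A d) {x y : A.carrier} (hxy : CenterRel A x y)
    (s : A.carrier) : d.eval A ![s, y, x] = d.eval A ![s, d.eval A ![s, x, y], s] := by
  have key := (hxy.eval_cons_eq_iff (d.subst ![.var 1, d.subst ![.var 2, .var 3, .var 0], .var 4])
    ![s, x, x, x] ![s, s, x, s]).mp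
  simpa [STerm.eval_subst_three, STerm.eval, hd.cancel_right, hd.cancel_left _ _ hxy] using key

theorem cancel_middle (hd : IsCenterDifference A d) {w z : A.carrier} (hwz : CenterRel A w z)
    (s t : A.carrier) : d.eval A ![d.eval A ![s, t, w], w, z] = d.eval A ![s, t, z] := by
  have key := (hwz.eval_cons_eq_iff (d.subst ![d.subst ![.var 1, .var 2, .var 3], .var 4, .var 0])
    ![s, t, w, w] ![s, t, t, t]).mp
  simpa [STerm.eval_subst_three, STerm.eval, hd.cancel_right] using key

theorem trans_eq (hd : IsCenterDifference A d) {x y z : A.carrier} (hxy : CenterRel A x y)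
    (hyz : CenterRel A y z) (s : A.carrier) :
    d.eval A ![s, x, z] = d.eval A ![d.eval A ![s, x, y], s, d.eval A ![s, y, z]] := by
  have hxz : CenterRel A x z := (centerCon A).iseqv.trans hxy hyz
  have hs : CenterRel A s (d.eval A ![s, y, z]) := by
    have h := (centerCon A).eval_three_rel d ((centerCon A).iseqv.refl s)
      ((centerCon A).iseqv.refl y) hyz
    rwa [hd.cancel_right] at h
  have key := (((centerCon A).iseqv.symm hxy).eval_cons_eq_iff
    (d.subst ![d.subst ![.var 1, .var 0, .var 2], .var 3, .var 4])
    ![s, x, x, z] ![s, y, s, d.eval A ![s, y, z]]).mp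
  simpa [STerm.eval_subst_three, STerm.eval, hd.cancel_right, hd.cancel_middle hxz,
    hd.cancel_left _ _ hs] using key

theorem interp_eq (hd : IsCenterDifference A d) (o : S.ops) {x y : Fin (S.arity o) → A.carrier}
    (hxy : ∀ i, CenterRel A (x i) (y i)) (s : A.carrier) :
    d.eval A ![s, A.interp o x, A.interp o y] =
      d.eval A ![s, A.interp o fun _ => s, A.interp o fun i => d.eval A ![s, x i, y i]] := by
  let n := S.arity o
  -- variables: the central block `z`, then `ā`, `c̄`, `w`; `T = d(w, f ā, f (d(aᵢ, cᵢ, zᵢ)))`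
  let T : STerm S (n + (n + (n + 1))) :=
    d.subst ![.var (Fin.natAdd n (Fin.natAdd n (Fin.natAdd n 0))),
      .app o fun i => .var (Fin.natAdd n (Fin.castAdd (n + 1) i)),
      .app o fun i => d.subst ![.var (Fin.natAdd n (Fin.castAdd (n + 1) i)),
        .var (Fin.natAdd n (Fin.natAdd n (Fin.castAdd 1 i))), .var (Fin.castAdd (n + (n + 1)) i)]]
  have key := (CenterRel.eval_append_eq_iff T hxy (Fin.append x (Fin.append x ![s]))
    (Fin.append (fun _ => s) (Fin.append x ![s]))).mp
  simpa [T, STerm.eval_subst_three, STerm.eval, Fin.append_left, Fin.append_right, hd.cancel_right,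
    hd.cancel_left _ _ (hxy _)] using key

end IsCenterDifference

end DifferenceTerm

namespace SCon

variable {S : Signature} {A B : SAlgebra S} (β : SCon A) (e : SHom A B) (a : A.carrier)

def CentralExtensionRel (d : STerm S 3) (x y : B.carrier) : Prop :=
  CenterRel B x y ∧ ∃ b, β.r a b ∧ d.eval B ![e.toFun a, x, y] = e.toFun b

variable {β e a} {d : STerm S 3}

theorem CentralExtensionRel.symm (hB : IsCenterDifference B d)
    (hA : ∀ x y : A.carrier, d.eval A ![x, y, y] = x) {x y : B.carrier}
    (h : CentralExtensionRel β e a d x y) : CentralExtensionRel β e a d y x := by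
  obtain ⟨hxy, b, hab, hb⟩ := h
  have hrel := β.eval_three_rel d (β.iseqv.refl a) hab (β.iseqv.refl a)
  rw [hA] at hrel
  exact ⟨(centerCon B).iseqv.symm hxy, _, hrel, by rw [hB.symm_eq hxy, hb, e.map_eval_three]⟩

theorem CentralExtensionRel.trans (hB : IsCenterDifference B d)
    (hA : ∀ x y : A.carrier, d.eval A ![x, y, y] = x) {x y z : B.carrier}
    (h : CentralExtensionRel β e a d x y) (h' : CentralExtensionRel β e a d y z) :
    CentralExtensionRel β e a d x z := by
  obtain ⟨hxy, b, hab, hb⟩ := h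
  obtain ⟨hyz, b', hab', hb'⟩ := h'
  have hrel := β.eval_three_rel d hab (β.iseqv.refl a) hab'
  rw [hA] at hrel
  exact ⟨(centerCon B).iseqv.trans hxy hyz, _, hrel,
    by rw [hB.trans_eq hxy hyz, hb, hb', e.map_eval_three]⟩

theorem CentralExtensionRel.interp (hB : IsCenterDifference B d)
    (hA : ∀ x y : A.carrier, d.eval A ![x, y, y] = x) (o : S.ops)
    {x y : Fin (S.arity o) → B.carrier} (h : ∀ i, CentralExtensionRel β e a d (x i) (y i)) :
    CentralExtensionRel β e a d (B.interp o x) (B.interp o y) := by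
  choose hxy b hab hb using h
  have hrel := β.eval_three_rel d (β.iseqv.refl a) (β.iseqv.refl (A.interp o fun _ => a))
    (β.compat o (fun _ => a) b hab)
  rw [hA] at hrel
  refine ⟨(centerCon B).compat o x y hxy, _, hrel, ?_⟩
  rw [hB.interp_eq o hxy, e.map_eval_three, e.map, e.map]
  simp only [hb]

variable (β e a)

def centralExtension (hB : IsCenterDifference B d)
    (hA : ∀ x y : A.carrier, d.eval A ![x, y, y] = x) : SCon B where
  r := CentralExtensionRel β e a d
  iseqv := ⟨fun x => ⟨(centerCon B).iseqv.refl x, a, β.iseqv.refl a, hB.cancel_right _ _⟩,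
    (·.symm hB hA), (·.trans hB hA)⟩
  compat o _ _ := CentralExtensionRel.interp hB hA o

variable {β e a}

theorem centralExtension_le (hB : IsCenterDifference B d)
    (hA : ∀ x y : A.carrier, d.eval A ![x, y, y] = x) {α : SCon B} (hβ : β ≤ comap e α) :
    β.centralExtension e a hB hA ≤ α := by
  rintro x y ⟨hxy, b, hab, hb⟩
  have hrel := α.eval_three_rel d (α.iseqv.refl x) (α.iseqv.refl (e.toFun a)) (hβ a b hab)
  rwa [hB.cancel_right, ← hb, hB.recover_right hxy] at hrel

theorem comap_centralExtension (hB : IsCenterDifference B d)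
    (hA : ∀ x y : A.carrier, d.eval A ![x, y, y] = x) (he : Injective e.toFun)
    (hβ : β ≤ comap e (centerCon B)) :
    comap e (β.centralExtension e a hB hA) = β := by
  refine le_antisymm ?_ fun x y hxy =>
    ⟨hβ x y hxy, d.eval A ![a, x, y], ?_, (e.map_eval_three d a x y).symm⟩
  · rintro x y ⟨hxy, b, hab, hb⟩
    have hy : d.eval A ![x, a, b] = y := he (by
      rw [e.map_eval_three, ← hb, hB.recover_right hxy])
    have hrel := β.eval_three_rel d (β.iseqv.refl x) (β.iseqv.refl a) hab
    rwa [hA, hy] at hrel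
  · have hrel := β.eval_three_rel d (β.iseqv.refl a) (β.iseqv.refl x) hxy
    rwa [hA] at hrel

end SCon

theorem central_congruence_extension_general {S : Signature}
    (V : SAlgebra S → Prop)
    (d : STerm S 3) (hd : IsGummDifferenceTerm V d)
    (A Abar : SAlgebra S) (hA : V A) (hAbar : V Abar)
    (e : SHom A Abar) (he : Function.Injective e.toFun)
    (a : A.carrier)
    (αbar : SCon Abar) (hαbar : αbar ≤ conCenter Abar)
    (β : SCon A) (hβ : β ≤ SCon.comap e αbar) :
    ∃ βbar : SCon Abar,
      (∀ x y : Abar.carrier, βbar.r x y ↔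
        ((conCenter Abar).r x y ∧
          ∃ b : A.carrier, β.r a b ∧ d.eval Abar ![e.toFun a, x, y] = e.toFun b)) ∧
      βbar ≤ αbar ∧ SCon.comap e βbar = β := by
  have hB : IsCenterDifference Abar d :=
    ⟨hd.1 Abar hAbar, hd.2 Abar hAbar (centerCon Abar) (conCommutator_centerCon_self Abar)⟩
  rw [conCenter_eq_centerCon] at hαbar ⊢
  exact ⟨β.centralExtension e a hB (hd.1 A hA), fun _ _ => Iff.rfl,
    SCon.centralExtension_le hB _ hβ,
    SCon.comap_centralExtension hB _ he fun x y h => hαbar _ _ (hβ x y h)⟩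

/-- Extension of central congruences (Davey–Kovács / Gumm): if `A` is a subalgebra of
`Abar` (via `e`) in a congruence modular variety with Gumm difference term `d`, `a ∈ A`,
`ᾱ ≤ ζ(Abar)` and `β ≤ ᾱ|_A`, then `β̄ := {(x,y) ∈ ζ(Abar) : d(a,x,y) ∈ [a]β}` is a
congruence on `Abar` with `β̄ ≤ ᾱ` and `β̄|_A = β`. -/
theorem central_congruence_extension {S : Signature}
    (V : SAlgebra S → Prop) (hV : IsCongruenceModularVariety V)
    (d : STerm S 3) (hd : IsGummDifferenceTerm V d)
    (A Abar : SAlgebra S) (hA : V A) (hAbar : V Abar)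
    (e : SHom A Abar) (he : Function.Injective e.toFun)
    (a : A.carrier)
    (αbar : SCon Abar) (hαbar : αbar ≤ conCenter Abar)
    (β : SCon A) (hβ : β ≤ SCon.comap e αbar) :
    ∃ βbar : SCon Abar,
      (∀ x y : Abar.carrier, βbar.r x y ↔
        ((conCenter Abar).r x y ∧
          ∃ b : A.carrier, β.r a b ∧ d.eval Abar ![e.toFun a, x, y] = e.toFun b)) ∧
      βbar ≤ αbar ∧ SCon.comap e βbar = β :=
  central_congruence_extension_general V d hd A Abar hA hAbar e he a αbar hαbar β hβ
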